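/- arXiv:1203.5841 — 2 statements merged into one kernel-verified Lean document; each statement's English description precedes it below -/
import Mathlib

section
/- If g is a symplectic automorphism of the complex Hilbert space V, then the antilinear operator Z_g = −A_g C_g^{-1} is symmetric (i.e., <y|Z_g x> = <x|Z_g y> for all x, y) and has operator norm strictly less than 1. -/
/-- The complex-linear part `C_f = ½(f − JfJ)` of a real-linear map `f`. -/
noncomputable def Cpart {V : Type*} [AddCommGroup V] [Module ℂ V] (f : V → V) : V → V :=
  fun v => (2 : ℂ)⁻¹ • (f v - Complex.I • f (Complex.I • v))

/-- The antilinear part `A_f = ½(f + JfJ)` of a real-linear map `f`. -/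
noncomputable def Apart {V : Type*} [AddCommGroup V] [Module ℂ V] (f : V → V) : V → V :=
  fun v => (2 : ℂ)⁻¹ • (f v + Complex.I • f (Complex.I • v))

/-!
Write `g = C + A` with `C = Cpart g` complex-linear and `A = Apart g` antilinear. Substituting
`I • x` and `I • y` into `Im ⟨g x, g y⟩ = Im ⟨x, y⟩` separates the pieces of different
(anti)linearity: `Re ⟨C x, C y⟩ - Re ⟨A x, A y⟩ = Re ⟨x, y⟩` and `⟨C x, A y⟩ = ⟨C y, A x⟩`.
The first identity gives `‖C v‖² = ‖v‖² + ‖A v‖²`, so `C` is bounded below; applied to `g⁻¹`,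
whose complex-linear part is `C†`, it shows that `C†` is injective, hence `C` is onto. Thus
`Z (C v) = -A v` determines `Z`, the second identity is the symmetry of `Z`, and
`‖A v‖² = ‖C v‖² - ‖v‖² ≤ (1 - M⁻²) ‖C v‖²` for any bound `M` of `‖C‖`.
-/

open Complex ContinuousLinearMap

section Algebra

variable {V : Type*} [AddCommGroup V] [Module ℂ V]

lemma Cpart_add_Apart (f : V → V) (v : V) : Cpart f v + Apart f v = f v := by
  simp only [Cpart, Apart]
  module

lemma smul_eq_re_smul_add_im_smul_I_smul (c : ℂ) (v : V) : c • v = c.re • v + c.im • I • v := by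
  conv_lhs => rw [← re_add_im c]
  rw [add_smul, mul_smul]
  norm_num [← Complex.coe_algebraMap, algebraMap_smul]

variable (h : V →ₗ[ℝ] V)

lemma Cpart_add (x y : V) : Cpart h (x + y) = Cpart h x + Cpart h y := by
  simp only [Cpart, smul_add, map_add]
  module

lemma Cpart_real_smul (r : ℝ) (v : V) : Cpart h (r • v) = r • Cpart h v := by
  simp only [Cpart, smul_comm I r, map_smul]
  module

lemma Cpart_I_smul (v : V) : Cpart h (I • v) = I • Cpart h v := by
  simp only [Cpart, smul_smul, I_mul_I, neg_one_smul, map_neg]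
  match_scalars <;> grind [I_mul_I]

lemma Apart_I_smul (v : V) : Apart h (I • v) = -(I • Apart h v) := by
  simp only [Apart, smul_smul, I_mul_I, neg_one_smul, map_neg]
  match_scalars <;> grind [I_mul_I]

noncomputable def cpartLinearMap : V →ₗ[ℂ] V where
  toFun := Cpart h
  map_add' := Cpart_add h
  map_smul' c v := by
    rw [RingHom.id_apply, smul_eq_re_smul_add_im_smul_I_smul c v, Cpart_add, Cpart_real_smul,
      Cpart_real_smul, Cpart_I_smul, smul_eq_re_smul_add_im_smul_I_smul c (Cpart h v)]

end Algebra

section InnerProduct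

variable {V : Type*} [NormedAddCommGroup V] [InnerProductSpace ℂ V]

def IsSymplectic (h : V → V) : Prop :=
  ∀ x y : V, (inner ℂ (h x) (h y) : ℂ).im = (inner ℂ x y : ℂ).im

lemma im_inner_Cpart_add_Apart (h : V →ₗ[ℝ] V) (hs : IsSymplectic h) (x y : V) :
    ((inner ℂ (Cpart h x) (Cpart h y) : ℂ) + inner ℂ (Cpart h x) (Apart h y)
      + starRingEnd ℂ (inner ℂ (Cpart h y) (Apart h x))
      + inner ℂ (Apart h x) (Apart h y)).im = (inner ℂ x y : ℂ).im := by
  rw [← hs, ← Cpart_add_Apart h x, ← Cpart_add_Apart h y, inner_conj_symm,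
    inner_add_left, inner_add_right, inner_add_right]
  ring_nf

lemma re_inner_Cpart_sub_re_inner_Apart (h : V →ₗ[ℝ] V) (hs : IsSymplectic h) (x y : V) :
    (inner ℂ (Cpart h x) (Cpart h y) : ℂ).re - (inner ℂ (Apart h x) (Apart h y) : ℂ).re
      = (inner ℂ x y : ℂ).re := by
  have hIx := im_inner_Cpart_add_Apart h hs (I • x) y
  have hIy := im_inner_Cpart_add_Apart h hs x (I • y)
  simp only [Cpart_I_smul, Apart_I_smul, inner_smul_left, inner_smul_right,
    inner_neg_left, inner_neg_right, conj_I, map_mul, map_neg] at hIx hIy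
  simp only [add_im, mul_im, neg_im, neg_re, I_re, I_im, conj_re, conj_im] at hIx hIy
  linarith

lemma inner_Cpart_Apart_comm (h : V →ₗ[ℝ] V) (hs : IsSymplectic h) (x y : V) :
    (inner ℂ (Cpart h x) (Apart h y) : ℂ) = inner ℂ (Cpart h y) (Apart h x) := by
  have hxy := im_inner_Cpart_add_Apart h hs x y
  have hIx := im_inner_Cpart_add_Apart h hs (I • x) y
  have hIy := im_inner_Cpart_add_Apart h hs x (I • y)
  have hIxIy := im_inner_Cpart_add_Apart h hs (I • x) (I • y)
  simp only [Cpart_I_smul, Apart_I_smul, inner_smul_left, inner_smul_right,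
    inner_neg_left, inner_neg_right, conj_I, map_mul, map_neg] at hIx hIy hIxIy
  simp only [add_im, mul_im, mul_re, neg_im, neg_re, I_re, I_im, conj_re,
    conj_im] at hxy hIx hIy hIxIy
  apply Complex.ext <;> linarith

lemma inner_Cpart_eq_inner_Cpart (h h' : V →ₗ[ℝ] V)
    (hs : ∀ x y : V, (inner ℂ (h x) y : ℂ).im = (inner ℂ x (h' y) : ℂ).im) (x y : V) :
    (inner ℂ (Cpart h x) y : ℂ) = inner ℂ x (Cpart h' y) := by
  have key (x y : V) : ((inner ℂ (Cpart h x) y : ℂ) + inner ℂ (Apart h x) y).im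
      = ((inner ℂ x (Cpart h' y) : ℂ) + inner ℂ x (Apart h' y)).im := by
    rw [← inner_add_left, ← inner_add_right, Cpart_add_Apart, Cpart_add_Apart, hs]
  have hxy := key x y
  have hIx := key (I • x) y
  have hIy := key x (I • y)
  have hIxIy := key (I • x) (I • y)
  simp only [Cpart_I_smul, Apart_I_smul, inner_smul_left, inner_smul_right,
    inner_neg_left, inner_neg_right, conj_I] at hIx hIy hIxIy
  simp only [add_im, mul_im, mul_re, neg_im, neg_re, I_re, I_im] at hxy hIx hIy hIxIy
  apply Complex.ext <;> linarith

lemma norm_Cpart_sq (h : V →ₗ[ℝ] V) (hs : IsSymplectic h) (v : V) :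
    ‖Cpart h v‖ ^ 2 = ‖v‖ ^ 2 + ‖Apart h v‖ ^ 2 := by
  have hsq (u : V) : (inner ℂ u u : ℂ).re = ‖u‖ ^ 2 := inner_self_eq_norm_sq (𝕜 := ℂ) u
  have := re_inner_Cpart_sub_re_inner_Apart h hs v v
  rw [hsq, hsq, hsq] at this
  linarith

lemma norm_le_norm_Cpart (h : V →ₗ[ℝ] V) (hs : IsSymplectic h) (v : V) :
    ‖v‖ ≤ ‖Cpart h v‖ := by
  rw [← pow_le_pow_iff_left₀ (norm_nonneg _) (norm_nonneg _) two_ne_zero, norm_Cpart_sq h hs]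
  exact le_add_of_nonneg_right (sq_nonneg _)

end InnerProduct

theorem ContinuousLinearMap.surjective_of_antilipschitz_of_ker_adjoint_eq_bot {𝕜 E F : Type*}
    [RCLike 𝕜] [NormedAddCommGroup E] [InnerProductSpace 𝕜 E] [CompleteSpace E]
    [NormedAddCommGroup F] [InnerProductSpace 𝕜 F] [CompleteSpace F]
    (T : E →L[𝕜] F) {K : NNReal} (hT : AntilipschitzWith K T) (hT' : (adjoint T).ker = ⊥) :
    Function.Surjective T := by
  have : CompleteSpace T.range :=
    (hT.isClosed_range T.uniformContinuous).completeSpace_coe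
  refine (LinearMap.range_eq_top (f := (T : E →ₗ[𝕜] F))).mp ?_
  rw [← Submodule.orthogonal_eq_bot_iff]
  exact T.orthogonal_range.trans hT'

lemma le_sqrt_one_sub_inv_sq_mul {a b c M : ℝ} (hM : 0 < M) (hc : 0 ≤ c)
    (habc : c ^ 2 = b ^ 2 + a ^ 2) (hcb : c ≤ M * b) : a ≤ √(1 - (M ^ 2)⁻¹) * c := by
  have hcb_sq : (M ^ 2)⁻¹ * c ^ 2 ≤ b ^ 2 := by
    rw [inv_mul_le_iff₀ (by positivity)]
    nlinarith
  calc a ≤ √((1 - (M ^ 2)⁻¹) * c ^ 2) := Real.le_sqrt_of_sq_le (by linarith)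
    _ = √(1 - (M ^ 2)⁻¹) * c := by rw [Real.sqrt_mul' _ (sq_nonneg c), Real.sqrt_sq hc]

section Hilbert

variable {V : Type*} [NormedAddCommGroup V] [InnerProductSpace ℂ V]

noncomputable def cpartCLM (g : V →L[ℝ] V) : V →L[ℂ] V where
  toLinearMap := cpartLinearMap g.toLinearMap
  cont := by
    change Continuous fun v => (2 : ℂ)⁻¹ • (g v - I • g (I • v))
    fun_prop

@[simp]
lemma cpartCLM_apply (g : V →L[ℝ] V) (v : V) : cpartCLM g v = Cpart g v := rfl

theorem exists_lt_one_norm_Apart_le (g : V →L[ℝ] V) (hsymp : IsSymplectic g) :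
    ∃ r < 1, ∀ v, ‖Apart g v‖ ≤ r * ‖Cpart g v‖ := by
  -- `+ 1` keeps `M` positive when `V` is trivial.
  set M := ‖cpartCLM g‖ + 1
  have hM : 0 < M := by positivity
  refine ⟨√(1 - (M ^ 2)⁻¹), ?_, fun v => ?_⟩
  · rw [Real.sqrt_lt' one_pos]
    linarith [inv_pos.mpr (pow_pos hM 2)]
  · refine le_sqrt_one_sub_inv_sq_mul hM (norm_nonneg _) (norm_Cpart_sq g.toLinearMap hsymp v) ?_
    calc ‖Cpart g v‖ = ‖cpartCLM g v‖ := rfl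
      _ ≤ ‖cpartCLM g‖ * ‖v‖ := (cpartCLM g).le_opNorm v
      _ ≤ M * ‖v‖ := by gcongr; linarith

variable [CompleteSpace V]

lemma cpartCLM_eq_adjoint (g g' : V →L[ℝ] V)
    (hs : ∀ x y : V, (inner ℂ (g x) y : ℂ).im = (inner ℂ x (g' y) : ℂ).im) :
    cpartCLM g = adjoint (cpartCLM g') :=
  (eq_adjoint_iff _ _).mpr (inner_Cpart_eq_inner_Cpart g.toLinearMap g'.toLinearMap hs)

theorem surjective_Cpart_of_symplectic (g : V →L[ℝ] V) (hbij : Function.Bijective g)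
    (hsymp : IsSymplectic g) : Function.Surjective (Cpart g) := by
  let e := ContinuousLinearEquiv.ofBijective g (LinearMap.ker_eq_bot.mpr hbij.1)
    (LinearMap.range_eq_top.mpr hbij.2)
  have hge (x : V) : g (e.symm x) = x := e.apply_symm_apply x
  have hsymp_inv : IsSymplectic e.symm := fun x y => by rw [← hsymp, hge, hge]
  have hadj : cpartCLM (e.symm : V →L[ℝ] V) = adjoint (cpartCLM g) :=
    cpartCLM_eq_adjoint _ _ fun x y => by
      rw [← hsymp]; simp only [ContinuousLinearEquiv.coe_coe, hge]
  refine (cpartCLM g).surjective_of_antilipschitz_of_ker_adjoint_eq_bot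
    ((cpartCLM g).antilipschitz_of_bound (K := 1) fun v => ?_) ?_
  · simpa using norm_le_norm_Cpart g.toLinearMap hsymp v
  · rw [← hadj, LinearMap.ker_eq_bot']
    intro v hv
    simp only [ContinuousLinearMap.coe_coe, cpartCLM_apply, ContinuousLinearEquiv.coe_coe] at hv
    simpa [hv] using norm_le_norm_Cpart (e.symm : V →L[ℝ] V).toLinearMap hsymp_inv v

end Hilbert

/-- If `g` is a symplectic automorphism of the complex Hilbert space `V` (a bounded
real-linear bijection preserving `Ω = Im⟨·|·⟩`), then the antilinear operator
`Z_g = −A_g C_g⁻¹` (characterized by `Z_g ∘ C_g = −A_g`, `C_g` being invertible) is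
symmetric — `⟨y|Z_g x⟩ = ⟨x|Z_g y⟩` for all `x, y` — and has operator norm strictly less
than `1`. -/
theorem stmt18 {V : Type*} [NormedAddCommGroup V] [InnerProductSpace ℂ V] [CompleteSpace V]
    (g : V →L[ℝ] V) (hbij : Function.Bijective g)
    (hsymp : ∀ x y : V, (inner ℂ (g x) (g y) : ℂ).im = (inner ℂ x y : ℂ).im)
    (Z : V → V) (hZ : ∀ v : V, Z (Cpart (g : V → V) v) = - Apart (g : V → V) v) :
    (∀ x y : V, (inner ℂ y (Z x) : ℂ) = (inner ℂ x (Z y) : ℂ)) ∧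
    ∃ r : ℝ, r < 1 ∧ ∀ v : V, ‖Z v‖ ≤ r * ‖v‖ := by
  have hsurj := surjective_Cpart_of_symplectic g hbij hsymp
  refine ⟨fun x y => ?_, ?_⟩
  · obtain ⟨u, rfl⟩ := hsurj x
    obtain ⟨v, rfl⟩ := hsurj y
    rw [hZ, hZ, inner_neg_right, inner_neg_right]
    exact congrArg Neg.neg (inner_Cpart_Apart_comm g.toLinearMap hsymp v u)
  · obtain ⟨r, hr, hApart⟩ := exists_lt_one_norm_Apart_le g hsymp
    refine ⟨r, hr, fun w => ?_⟩
    obtain ⟨v, rfl⟩ := hsurj w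
    rw [hZ, norm_neg]
    exact hApart v
end

section
/- If g is a symplectic automorphism of V and x, y ∈ V, then the transformed annihilators and creators a_g(v) = a(C_g v) + c(A_g v) and c_g(v) = c(C_g v) + a(A_g v) satisfy the canonical commutation relations: [a_g(x), a_g(y)] = 0, [a_g(x), c_g(y)] = <x|y>·I, [c_g(x), c_g(y)] = 0. -/
open scoped BigOperators

/-!
Write `C = C_g` and `A = A_g`. Expanding the brackets bilinearly reduces the three relations to the
CCR for `a` and `c` together with the two scalar identities `⟨C x|C y⟩ - ⟨A y|A x⟩ = ⟨x|y⟩` and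
`⟨C x|A y⟩ = ⟨C y|A x⟩`. Written out in the inner products `⟨g u|g v⟩` with `u ∈ {x, ix}`,
`v ∈ {y, iy}`, both identities involve these only through the differences `z - z̄ = 2i Im z`,
and symplecticity computes those imaginary parts from `⟨x|y⟩`.

In the symmetric-algebra model, `[a x, a y]` is the commutator of two derivations, hence a
derivation; it kills the generators `ι w` because `a x (ι w)` is a scalar, so it vanishes.
-/

open Complex ComplexConjugate
open scoped InnerProductSpace

section SymplecticParts

variable {V : Type*} [NormedAddCommGroup V] [InnerProductSpace ℂ V] (f : V → V)

theorem inner_Cpart_Cpart (x y : V) :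
    ⟪Cpart f x, Cpart f y⟫_ℂ = 4⁻¹ * (⟪f x, f y⟫_ℂ + ⟪f (I • x), f (I • y)⟫_ℂ
      + I * ⟪f (I • x), f y⟫_ℂ - I * ⟪f x, f (I • y)⟫_ℂ) := by
  simp only [Cpart, inner_smul_left, inner_smul_right, inner_sub_left, inner_sub_right, map_inv₀,
    conj_I, map_ofNat]
  linear_combination (-4⁻¹ * ⟪f (I • x), f (I • y)⟫_ℂ) * I_sq

theorem inner_Apart_Apart (x y : V) :
    ⟪Apart f x, Apart f y⟫_ℂ = 4⁻¹ * (⟪f x, f y⟫_ℂ + ⟪f (I • x), f (I • y)⟫_ℂ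
      - I * ⟪f (I • x), f y⟫_ℂ + I * ⟪f x, f (I • y)⟫_ℂ) := by
  simp only [Apart, inner_smul_left, inner_smul_right, inner_add_left, inner_add_right, map_inv₀,
    conj_I, map_ofNat]
  linear_combination (-4⁻¹ * ⟪f (I • x), f (I • y)⟫_ℂ) * I_sq

theorem inner_Cpart_Apart (x y : V) :
    ⟪Cpart f x, Apart f y⟫_ℂ = 4⁻¹ * (⟪f x, f y⟫_ℂ - ⟪f (I • x), f (I • y)⟫_ℂ
      + I * ⟪f (I • x), f y⟫_ℂ + I * ⟪f x, f (I • y)⟫_ℂ) := by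
  simp only [Cpart, Apart, inner_smul_left, inner_smul_right, inner_add_right, inner_sub_left,
    map_inv₀, conj_I, map_ofNat]
  linear_combination (4⁻¹ * ⟪f (I • x), f (I • y)⟫_ℂ) * I_sq

variable {f}

theorem inner_map_sub_conj (hf : ∀ x y, (⟪f x, f y⟫_ℂ).im = (⟪x, y⟫_ℂ).im) (x y : V) :
    ⟪f x, f y⟫_ℂ - conj ⟪f x, f y⟫_ℂ = 2 * (⟪x, y⟫_ℂ).im * I ∧
    ⟪f (I • x), f (I • y)⟫_ℂ - conj ⟪f (I • x), f (I • y)⟫_ℂ = 2 * (⟪x, y⟫_ℂ).im * I ∧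
    ⟪f (I • x), f y⟫_ℂ - conj ⟪f (I • x), f y⟫_ℂ = -2 * (⟪x, y⟫_ℂ).re * I ∧
    ⟪f x, f (I • y)⟫_ℂ - conj ⟪f x, f (I • y)⟫_ℂ = 2 * (⟪x, y⟫_ℂ).re * I := by
  refine ⟨?_, ?_, ?_, ?_⟩ <;> rw [sub_conj] <;> simp [hf]

theorem inner_Cpart_sub_inner_Apart (hf : ∀ x y, (⟪f x, f y⟫_ℂ).im = (⟪x, y⟫_ℂ).im) (x y : V) :
    ⟪Cpart f x, Cpart f y⟫_ℂ - ⟪Apart f y, Apart f x⟫_ℂ = ⟪x, y⟫_ℂ := by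
  obtain ⟨hp, hq, hr, hs⟩ := inner_map_sub_conj hf x y
  rw [← inner_conj_symm (Apart f y) (Apart f x), inner_Apart_Apart, inner_Cpart_Cpart]
  simp only [map_mul, map_add, map_sub, map_inv₀, map_ofNat, conj_I]
  linear_combination 4⁻¹ * (hp + hq + I * hr - I * hs) - ((⟪x, y⟫_ℂ).re : ℂ) * I_sq
    + re_add_im ⟪x, y⟫_ℂ

theorem inner_Cpart_Apart_comm_s19 (hf : ∀ x y, (⟪f x, f y⟫_ℂ).im = (⟪x, y⟫_ℂ).im) (x y : V) :
    ⟪Cpart f x, Apart f y⟫_ℂ = ⟪Cpart f y, Apart f x⟫_ℂ := by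
  obtain ⟨hp, hq, hr, hs⟩ := inner_map_sub_conj hf x y
  rw [inner_Cpart_Apart, inner_Cpart_Apart, ← inner_conj_symm (f y), ← inner_conj_symm (f (I • y)),
    ← inner_conj_symm (f y) (f (I • x)), ← inner_conj_symm (f (I • y)) (f x)]
  linear_combination 4⁻¹ * (hp - hq + I * hr + I * hs)

end SymplecticParts

section CCR

attribute [local instance] LieRing.ofAssociativeRing

variable {V : Type*} [NormedAddCommGroup V] [InnerProductSpace ℂ V]
  {R : Type*} [Ring R] [Algebra ℂ R]

def SatisfiesCCR (a c : V → R) : Prop :=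
  ∀ x y, ⁅a x, a y⁆ = 0 ∧ ⁅a x, c y⁆ = ⟪x, y⟫_ℂ • 1 ∧ ⁅c x, c y⁆ = 0

theorem SatisfiesCCR.bogoliubov {a c : V → R} (h : SatisfiesCCR a c) {C A : V → V}
    (hCC : ∀ x y, ⟪C x, C y⟫_ℂ - ⟪A y, A x⟫_ℂ = ⟪x, y⟫_ℂ)
    (hCA : ∀ x y, ⟪C x, A y⟫_ℂ = ⟪C y, A x⟫_ℂ) :
    SatisfiesCCR (fun v => a (C v) + c (A v)) (fun v => c (C v) + a (A v)) := by
  have hca : ∀ u v, ⁅c u, a v⁆ = -(⟪v, u⟫_ℂ • 1) := fun u v => by rw [← lie_skew, (h v u).2.1]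
  intro x y
  simp only [add_lie, lie_add, (h _ _).1, (h _ _).2.1, (h _ _).2.2, hca]
  refine ⟨?_, ?_, ?_⟩
  · rw [hCA x y]
    abel
  · rw [← hCC x y, sub_smul]
    abel
  · rw [← inner_conj_symm (A x) (C y), ← hCA x y, inner_conj_symm]
    abel

end CCR

section SymmetricAlgebra

attribute [local instance] LieRing.ofAssociativeRing

variable {R A : Type*} [CommRing R] [CommRing A] [Algebra R A]

theorem Derivation.lie_mulLeft (D : Derivation R A A) (x : A) :
    ⁅(D : Module.End R A), LinearMap.mulLeft R x⁆ = LinearMap.mulLeft R (D x) := by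
  ext p
  simp only [Ring.lie_def, LinearMap.sub_apply, Module.End.mul_apply, LinearMap.mulLeft_apply,
    Derivation.coeFn_coe, D.leibniz, smul_eq_mul, add_sub_cancel_left]
  ring

theorem LinearMap.lie_mulLeft_mulLeft (x y : A) :
    ⁅LinearMap.mulLeft R x, LinearMap.mulLeft R y⁆ = 0 := by
  ext p
  simp only [Ring.lie_def, LinearMap.sub_apply, Module.End.mul_apply, LinearMap.mulLeft_apply,
    LinearMap.zero_apply]
  ring

variable {V : Type*} [NormedAddCommGroup V] [InnerProductSpace ℂ V] [Algebra ℂ A]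

theorem satisfiesCCR_derivation_mulLeft (ι : V →ₗ[ℂ] A)
    (hgen : Algebra.adjoin ℂ (Set.range ι) = ⊤) (a : V → Derivation ℂ A A)
    (haι : ∀ v w, a v (ι w) = ⟪v, w⟫_ℂ • 1) :
    SatisfiesCCR (fun v => (a v : Module.End ℂ A)) (fun v => LinearMap.mulLeft ℂ (ι v)) := by
  intro x y
  refine ⟨?_, ?_, LinearMap.lie_mulLeft_mulLeft _ _⟩
  · have hDD : ⁅a x, a y⁆ = 0 := Derivation.ext_of_adjoin_eq_top _ hgen <| by
      rintro _ ⟨u, rfl⟩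
      simp [Derivation.commutator_apply, haι]
    rw [← Derivation.commutator_coe_linear_map, hDD, Derivation.coe_zero_linearMap]
  · rw [Derivation.lie_mulLeft, haι]
    ext p
    simp

end SymmetricAlgebra

theorem stmt19_general {V : Type*} [NormedAddCommGroup V] [InnerProductSpace ℂ V]
    (g : V →L[ℝ] V)
    (hsymp : ∀ x y : V, (inner ℂ (g x) (g y) : ℂ).im = (inner ℂ x y : ℂ).im)
    {A : Type*} [CommRing A] [Algebra ℂ A] (ι : V →ₗ[ℂ] A)
    (hgen : Algebra.adjoin ℂ (Set.range ι) = ⊤)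
    (a : V → A →ₗ[ℂ] A)
    (haι : ∀ v w, a v (ι w) = (inner ℂ v w : ℂ) • (1 : A))
    (haDer : ∀ v p q, a v (p * q) = a v p * q + p * a v q)
    (c : V → A →ₗ[ℂ] A)
    (hc : ∀ v, c v = LinearMap.mulLeft ℂ (ι v))
    (ag cg : V → A →ₗ[ℂ] A)
    (hag : ∀ v, ag v = a (Cpart (g : V → V) v) + c (Apart (g : V → V) v))
    (hcg : ∀ v, cg v = c (Cpart (g : V → V) v) + a (Apart (g : V → V) v)) :
    ∀ x y : V,
      (ag x ∘ₗ ag y - ag y ∘ₗ ag x = 0) ∧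
      (ag x ∘ₗ cg y - cg y ∘ₗ ag x = (inner ℂ x y : ℂ) • LinearMap.id) ∧
      (cg x ∘ₗ cg y - cg y ∘ₗ cg x = 0) := by
  let D (v : V) : Derivation ℂ A A :=
    Derivation.mk' (a v) fun p q => by rw [haDer, smul_eq_mul, smul_eq_mul, mul_comm q]; abel
  have hCCR : SatisfiesCCR ag cg := by
    rw [funext hag, funext hcg, funext hc]
    exact (satisfiesCCR_derivation_mulLeft ι hgen D haι).bogoliubov
      (inner_Cpart_sub_inner_Apart hsymp) (inner_Cpart_Apart_comm_s19 hsymp)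
  intro x y
  simpa only [Ring.lie_def, Module.End.mul_eq_comp, Module.End.one_eq_id] using hCCR x y

/-- Canonical commutation relations for the transformed creators and annihilators.  Let `g`
be a symplectic automorphism of the complex Hilbert space `V` (a bounded real-linear
bijection preserving `Ω = Im⟨·|·⟩`), with complex-linear part `C_g` and antilinear part
`A_g`.  On the symmetric algebra `SV` (modelled by a commutative ℂ-algebra `A` generated by
the image of `ι : V →ₗ[ℂ] A`), with `c v` multiplication by `ι v` and `a v` the derivation
with `a v 1 = 0`, `a v (ι w) = ⟨v|w⟩·1`, set
`a_g(v) = a(C_g v) + c(A_g v)` and `c_g(v) = c(C_g v) + a(A_g v)`.  Then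
`[a_g(x), a_g(y)] = 0`, `[a_g(x), c_g(y)] = ⟨x|y⟩·I`, `[c_g(x), c_g(y)] = 0`. -/
theorem stmt19 {V : Type*} [NormedAddCommGroup V] [InnerProductSpace ℂ V]
    (g : V →L[ℝ] V) (hgbij : Function.Bijective g)
    (hsymp : ∀ x y : V, (inner ℂ (g x) (g y) : ℂ).im = (inner ℂ x y : ℂ).im)
    {A : Type*} [CommRing A] [Algebra ℂ A] (ι : V →ₗ[ℂ] A)
    (hgen : Algebra.adjoin ℂ (Set.range ι) = ⊤)
    (a : V → A →ₗ[ℂ] A)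
    (ha1 : ∀ v, a v 1 = 0)
    (haι : ∀ v w, a v (ι w) = (inner ℂ v w : ℂ) • (1 : A))
    (haDer : ∀ v p q, a v (p * q) = a v p * q + p * a v q)
    (c : V → A →ₗ[ℂ] A)
    (hc : ∀ v, c v = LinearMap.mulLeft ℂ (ι v))
    (ag cg : V → A →ₗ[ℂ] A)
    (hag : ∀ v, ag v = a (Cpart (g : V → V) v) + c (Apart (g : V → V) v))
    (hcg : ∀ v, cg v = c (Cpart (g : V → V) v) + a (Apart (g : V → V) v)) :
    ∀ x y : V,
      (ag x ∘ₗ ag y - ag y ∘ₗ ag x = 0) ∧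
      (ag x ∘ₗ cg y - cg y ∘ₗ ag x = (inner ℂ x y : ℂ) • LinearMap.id) ∧
      (cg x ∘ₗ cg y - cg y ∘ₗ cg x = 0) :=
  stmt19_general g hsymp ι hgen a haι haDer c hc ag cg hag hcg
end
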